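/- arXiv:2210.00895 — 2 statements merged into one kernel-verified Lean document; each statement's English description precedes it below -/
import Mathlib

section
/- Consider the model D = P[0,1] of all Borel probability measures on [0,1]. For every ν ∈ P[0,1]: φ*_ν(x) = Linf≤(x,ν) for all x ≤ E(ν), and φ*_ν(x) = Linf≥(x,ν) for all x ≥ E(ν), where both sides take values in [0,+∞]. -/
open MeasureTheory Filter Set ProbabilityTheory
open scoped ENNReal NNReal

noncomputable section

/-- Mean of a (probability) measure on ℝ. -/
def Emean (ν : Measure ℝ) : ℝ := ∫ x, x ∂ν

open Classical in
/-- Kullback–Leibler divergence `∫ ln (dζ/dν) dζ`, equal to `+∞` if `ζ` is not absolutely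
continuous with respect to `ν` (or the integral is not defined). -/
def KL (ζ ν : Measure ℝ) : ℝ≥0∞ :=
  if ζ ≪ ν ∧ Integrable (fun x => Real.log ((ζ.rnDeriv ν x).toReal)) ζ
  then ENNReal.ofReal (∫ x, Real.log ((ζ.rnDeriv ν x).toReal) ∂ζ)
  else ⊤

/-- Log-moment generating function `φ_ν`, with values in `EReal` (so that `+∞` is allowed). -/
def logMgf (ν : Measure ℝ) (l : ℝ) : EReal :=
  ENNReal.log (∫⁻ x, ENNReal.ofReal (Real.exp (l * x)) ∂ν)

/-- Fenchel–Legendre transform `φ*_ν(x) = sup_λ (λ x − φ_ν(λ))`. -/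
def phiStar (ν : Measure ℝ) (x : ℝ) : EReal :=
  ⨆ l : ℝ, ((l * x : ℝ) : EReal) - logMgf ν l

/-- `Φ(ν', ν) = inf_{x ∈ [E(ν'), E(ν)]} (φ*_{ν'}(x) + φ*_ν(x))`. -/
def Phi (ν' ν : Measure ℝ) : EReal :=
  ⨅ x ∈ Set.Icc (Emean ν') (Emean ν), (phiStar ν' x + phiStar ν x)

/-- The model `P[0,1]` of all Borel probability measures on `[0,1]` (seen as measures on ℝ). -/
def Pcc : Set (Measure ℝ) :=
  {ζ | IsProbabilityMeasure ζ ∧ ζ (Set.Icc (0:ℝ) 1)ᶜ = 0}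

/-- `Linf<(x, ν) = inf {KL(ζ, ν) : ζ ∈ D, E(ζ) < x}`, with `inf ∅ = +∞`. -/
def Linflt (D : Set (Measure ℝ)) (x : ℝ) (ν : Measure ℝ) : ℝ≥0∞ :=
  ⨅ ζ ∈ {ζ ∈ D | Emean ζ < x}, KL ζ ν

/-- `Linf≤(x, ν) = inf {KL(ζ, ν) : ζ ∈ D, E(ζ) ≤ x}`, with `inf ∅ = +∞`. -/
def Linfle (D : Set (Measure ℝ)) (x : ℝ) (ν : Measure ℝ) : ℝ≥0∞ :=
  ⨅ ζ ∈ {ζ ∈ D | Emean ζ ≤ x}, KL ζ ν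

/-- `Linf>(x, ν) = inf {KL(ζ, ν) : ζ ∈ D, E(ζ) > x}`, with `inf ∅ = +∞`. -/
def Linfgt (D : Set (Measure ℝ)) (x : ℝ) (ν : Measure ℝ) : ℝ≥0∞ :=
  ⨅ ζ ∈ {ζ ∈ D | x < Emean ζ}, KL ζ ν

/-- `Linf≥(x, ν) = inf {KL(ζ, ν) : ζ ∈ D, E(ζ) ≥ x}`, with `inf ∅ = +∞`. -/
def Linfge (D : Set (Measure ℝ)) (x : ℝ) (ν : Measure ℝ) : ℝ≥0∞ :=
  ⨅ ζ ∈ {ζ ∈ D | x ≤ Emean ζ}, KL ζ ν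

/-- Closed support of a measure on ℝ. -/
def msupport (ν : Measure ℝ) : Set ℝ := {x | ∀ U ∈ nhds x, ν U ≠ 0}

/-- Lower end `m(ν)` of the closed support of `ν`. -/
def mMin (ν : Measure ℝ) : ℝ := sInf (msupport ν)

/-- Upper end `M(ν)` of the closed support of `ν`. -/
def mMax (ν : Measure ℝ) : ℝ := sSup (msupport ν)

/-!
Weak duality is the Gibbs variational inequality `λ E(ζ) - φ_ν(λ) ≤ KL(ζ, ν)`: for `λ ≤ 0` and
`E(ζ) ≤ x` it bounds `λ x - φ_ν(λ)`, and for `λ ≥ 0` its case `ζ = ν` (Jensen) bounds it by `0`.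

For `x ≤ E(ν)` the infimum is attained unless `φ*_ν(x) = +∞`. If `ν` charges `(-∞, x)`, then
`φ_ν(λ) ≥ λ c + log ν(-∞, c]` for `λ ≤ 0` and some `c < x`, so by the mean value theorem the mean
`φ_ν'(λ)` of the exponential tilt of `ν` falls below `x` for some `λ ≤ 0`; by continuity some tilt
has mean exactly `x`, and its divergence is `λ x - φ_ν(λ)`. Otherwise `ν` lives on `[x, 1]` and
`λ x - φ_ν(λ) → -log ν{x}` as `λ → -∞`: either `ν{x} = 0` and `φ*_ν(x) = +∞`, or the Dirac mass
at `x` has divergence `-log ν{x}`.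

The case `x ≥ E(ν)` follows by the reflection `t ↦ 1 - t`.
-/

open InformationTheory ProbabilityTheory Real
open scoped Topology

lemma coe_le_iSup_of_tendsto {ι : Type*} {F : Filter ι} [F.NeBot] {f : ι → ℝ} {a : ℝ}
    (h : Tendsto f F (𝓝 a)) : (a : EReal) ≤ ⨆ i, (f i : EReal) :=
  le_of_tendsto' ((continuous_coe_real_ereal.tendsto a).comp h)
    fun i => le_iSup (fun i => (f i : EReal)) i

lemma iSup_coe_eq_top_of_tendsto_atTop {ι : Type*} {F : Filter ι} [F.NeBot] {f : ι → ℝ}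
    (h : Tendsto f F atTop) : ⨆ i, (f i : EReal) = ⊤ :=
  top_le_iff.1 (le_of_tendsto' (EReal.tendsto_coe_nhds_top_iff.2 h)
    fun i => le_iSup (fun i => (f i : EReal)) i)

lemma eq_coe_biInf_of_forall_le {ι : Type*} {S : Set ι} {f : ι → ℝ≥0∞} {v : EReal}
    (hle : ∀ i ∈ S, v ≤ f i) (hattained : v = ⊤ ∨ ∃ i ∈ S, (f i : EReal) ≤ v) :
    v = ((⨅ i ∈ S, f i : ℝ≥0∞) : EReal) := by
  rcases hattained with rfl | ⟨i, hi, hfi⟩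
  · refine (EReal.coe_ennreal_eq_top_iff.2 (iInf₂_eq_top.2 fun j hj => ?_)).symm
    exact EReal.coe_ennreal_eq_top_iff.1 (top_le_iff.1 (hle j hj))
  · obtain rfl : v = f i := le_antisymm (hle i hi) hfi
    exact congrArg _ (le_antisymm (le_iInf₂ fun j hj => EReal.coe_ennreal_le_coe_ennreal_iff.1
      (hle j hj)) (iInf₂_le i hi))

lemma exists_lt_measure_Iic_ne_zero {ν : Measure ℝ} {x : ℝ} (h : ν (Iio x) ≠ 0) :
    ∃ c < x, ν (Iic c) ≠ 0 := by
  have hlt : ∀ n : ℕ, x - 1 / ((n : ℝ) + 1) < x := fun n => by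
    have : (0 : ℝ) < 1 / ((n : ℝ) + 1) := by positivity
    linarith
  have hlim : Tendsto (fun n : ℕ => x - 1 / ((n : ℝ) + 1)) atTop (𝓝 x) := by
    simpa using tendsto_const_nhds.sub (tendsto_one_div_add_atTop_nhds_zero_nat (𝕜 := ℝ))
  rw [← iUnion_Iic_eq_Iio_of_lt_of_tendsto hlt hlim, Ne, measure_iUnion_null_iff] at h
  obtain ⟨n, hn⟩ := not_forall.1 h
  exact ⟨_, hlt n, hn⟩

lemma dirac_absolutelyContinuous {α : Type*} [MeasurableSpace α] {ν : Measure α} {x : α}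
    (hx : ν {x} ≠ 0) : Measure.dirac x ≪ ν :=
  Measure.AbsolutelyContinuous.mk fun s hs hνs => by
    have hxs : x ∉ s := fun hxs => hx (measure_mono_null (singleton_subset_iff.2 hxs) hνs)
    simp [Measure.dirac_apply' _ hs, hxs]

lemma integral_sub_log_integral_exp_le_integral_llr {α : Type*} [MeasurableSpace α]
    {μ ν : Measure α} [IsProbabilityMeasure μ] [IsProbabilityMeasure ν] {f : α → ℝ}
    (hμν : μ ≪ ν) (hllr : Integrable (llr μ ν) μ) (hf : Integrable f μ)
    (hexp : Integrable (fun x => exp (f x)) ν) :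
    ∫ x, f x ∂μ - log (∫ x, exp (f x) ∂ν) ≤ ∫ x, llr μ ν x ∂μ := by
  have := isProbabilityMeasure_tilted hexp
  have hμν' : μ ≪ ν.tilted f := hμν.trans (absolutelyContinuous_tilted hexp)
  have h := integral_llr_add_sub_measure_univ_nonneg hμν'
    (integrable_llr_tilted_right hμν hf hllr hexp)
  rw [integral_llr_tilted_right hμν hf hexp hllr] at h
  simp only [probReal_univ] at h
  linarith

lemma KL_eq_klDiv (ζ ν : Measure ℝ) [IsProbabilityMeasure ζ] [IsProbabilityMeasure ν] :
    KL ζ ν = klDiv ζ ν := by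
  rw [KL, klDiv_def]
  simp only [probReal_univ, add_sub_cancel_right]
  classical exact if_congr Iff.rfl rfl rfl

lemma KL_self (ν : Measure ℝ) [IsProbabilityMeasure ν] : KL ν ν = 0 := by
  rw [KL_eq_klDiv, klDiv_self]

lemma KL_dirac {ν : Measure ℝ} [IsProbabilityMeasure ν] {x : ℝ} (hx : ν {x} ≠ 0) :
    KL (Measure.dirac x) ν = ENNReal.ofReal (-log (ν.real {x})) := by
  have hac := dirac_absolutelyContinuous hx
  have hrn : (Measure.dirac x).rnDeriv ν x = (ν {x})⁻¹ := by
    have h := Measure.setLIntegral_rnDeriv hac {x}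
    rw [lintegral_singleton, Measure.dirac_apply_of_mem (mem_singleton x)] at h
    exact ENNReal.eq_inv_of_mul_eq_one_left h
  rw [KL, if_pos ⟨hac, integrable_dirac enorm_lt_top⟩, integral_dirac, hrn, ENNReal.toReal_inv,
    log_inv]
  rfl

lemma ae_mem_Icc_of_mem_Pcc {ζ : Measure ℝ} (hζ : ζ ∈ Pcc) : ∀ᵐ t ∂ζ, t ∈ Icc (0 : ℝ) 1 :=
  ae_iff.2 hζ.2

lemma integrable_of_mem_Pcc {ζ : Measure ℝ} (hζ : ζ ∈ Pcc) {f : ℝ → ℝ} (hf : Continuous f) :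
    Integrable f ζ := by
  have := hζ.1
  obtain ⟨C, hC⟩ := isCompact_Icc.exists_bound_of_continuousOn hf.continuousOn
  exact Integrable.of_bound hf.aestronglyMeasurable C
    ((ae_mem_Icc_of_mem_Pcc hζ).mono fun t ht => hC t ht)

lemma integrable_exp_mul_of_mem_Pcc {ζ : Measure ℝ} (hζ : ζ ∈ Pcc) (l : ℝ) :
    Integrable (fun t => exp (l * t)) ζ :=
  integrable_of_mem_Pcc hζ (by fun_prop)

lemma integrable_id_of_mem_Pcc {ζ : Measure ℝ} (hζ : ζ ∈ Pcc) : Integrable (fun t : ℝ => t) ζ :=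
  integrable_of_mem_Pcc hζ continuous_id

lemma mem_Pcc_of_absolutelyContinuous {ζ ν : Measure ℝ} [IsProbabilityMeasure ζ] (hν : ν ∈ Pcc)
    (hζν : ζ ≪ ν) : ζ ∈ Pcc :=
  ⟨‹_›, hζν hν.2⟩

section ExpMoments

variable {ν : Measure ℝ}

lemma logMgf_eq_cgf [IsProbabilityMeasure ν] {l : ℝ} (hν : Integrable (fun t => exp (l * t)) ν) :
    logMgf ν l = cgf id ν l := by
  rw [logMgf, ← ofReal_integral_eq_lintegral_ofReal hν (ae_of_all _ fun _ => (exp_pos _).le)]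
  exact ENNReal.log_ofReal_of_pos (mgf_pos (X := id) hν)

lemma phiStar_nonneg [IsProbabilityMeasure ν] (x : ℝ) : 0 ≤ phiStar ν x :=
  le_iSup_of_le 0 (by simp [logMgf])

lemma coe_ofReal_le_phiStar [IsProbabilityMeasure ν] {r x : ℝ} (h : (r : EReal) ≤ phiStar ν x) :
    (ENNReal.ofReal r : EReal) ≤ phiStar ν x := by
  rw [EReal.coe_ennreal_ofReal, EReal.coe_strictMono.monotone.map_max]
  exact max_le h (phiStar_nonneg x)

lemma phiStar_eq_iSup_cgf [IsProbabilityMeasure ν]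
    (hν : ∀ l, Integrable (fun t => exp (l * t)) ν) (x : ℝ) :
    phiStar ν x = ⨆ l : ℝ, ((l * x - cgf id ν l : ℝ) : EReal) := by
  simp only [phiStar, logMgf_eq_cgf (hν _), EReal.coe_sub]

lemma interior_integrableExpSet_id (hν : ∀ l, Integrable (fun t => exp (l * t)) ν) :
    interior (integrableExpSet id ν) = univ := by
  rw [show integrableExpSet id ν = univ from eq_univ_of_forall hν, interior_univ]

lemma differentiable_cgf (hν : ∀ l, Integrable (fun t => exp (l * t)) ν) :
    Differentiable ℝ (cgf id ν) := fun l =>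
  (analyticOnNhd_cgf l (by simp [interior_integrableExpSet_id hν])).differentiableAt

lemma continuous_deriv_cgf (hν : ∀ l, Integrable (fun t => exp (l * t)) ν) :
    Continuous (deriv (cgf id ν)) := by
  have h := (analyticOnNhd_cgf (X := id) (μ := ν)).deriv
  rw [interior_integrableExpSet_id hν] at h
  exact continuousOn_univ.1 h.continuousOn

lemma deriv_cgf_id_zero [IsProbabilityMeasure ν]
    (hν : ∀ l, Integrable (fun t => exp (l * t)) ν) :
    deriv (cgf id ν) 0 = Emean ν := by
  rw [deriv_cgf_zero (by simp [interior_integrableExpSet_id hν]), probReal_univ, div_one]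
  rfl

lemma mul_add_log_measureReal_Iic_le_cgf [IsProbabilityMeasure ν]
    (hν : ∀ l, Integrable (fun t => exp (l * t)) ν) {l c : ℝ} (hl : l ≤ 0)
    (hc : 0 < ν.real (Iic c)) :
    l * c + log (ν.real (Iic c)) ≤ cgf id ν l := by
  have hmgf : exp (l * c) * ν.real (Iic c) ≤ mgf id ν l := by
    calc exp (l * c) * ν.real (Iic c)
        = ∫ t, (Iic c).indicator (fun _ => exp (l * c)) t ∂ν := by
          rw [integral_indicator_const _ measurableSet_Iic, smul_eq_mul, mul_comm]
      _ ≤ ∫ t, exp (l * t) ∂ν := by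
          refine integral_mono ((integrable_const _).indicator measurableSet_Iic) (hν l) fun t => ?_
          by_cases ht : t ≤ c
          · simpa [ht] using mul_le_mul_of_nonpos_left ht hl
          · simp [ht, (exp_pos _).le]
  rw [← log_exp (l * c), ← log_mul (exp_pos _).ne' hc.ne']
  exact log_le_log (by positivity) hmgf

lemma mul_sub_cgf_eq_neg_log [IsProbabilityMeasure ν] {l : ℝ}
    (hν : Integrable (fun t => exp (l * t)) ν) (x : ℝ) :
    l * x - cgf id ν l = -log (mgf id ν l * exp (-(l * x))) := by
  rw [log_mul (mgf_pos (X := id) hν).ne' (exp_pos _).ne', log_exp, cgf]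
  ring

lemma tendsto_mgf_mul_exp_atBot [IsFiniteMeasure ν] {x : ℝ} (hx : ∀ᵐ t ∂ν, x ≤ t) :
    Tendsto (fun l => mgf id ν l * exp (-(l * x))) atBot (𝓝 (ν.real {x})) := by
  have hmgf : ∀ l, mgf id ν l * exp (-(l * x)) = ∫ t, exp (l * (t - x)) ∂ν := fun l => by
    rw [mgf, ← integral_mul_const]
    congr 1 with t
    rw [← exp_add, id]
    ring_nf
  simp_rw [hmgf, ← integral_indicator_one (measurableSet_singleton x)]
  refine tendsto_integral_filter_of_dominated_convergence (fun _ => 1)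
    (Eventually.of_forall fun l => by fun_prop) ?_ (integrable_const _) ?_
  · filter_upwards [eventually_le_atBot 0] with l hl
    filter_upwards [hx] with t ht
    rw [norm_of_nonneg (exp_pos _).le, exp_le_one_iff]
    nlinarith
  · filter_upwards [hx] with t ht
    rcases ht.eq_or_lt with rfl | hxt
    · simp
    · rw [indicator_of_notMem (by simpa using hxt.ne')]
      exact tendsto_exp_atBot.comp (tendsto_id.atBot_mul_const (by linarith))

lemma Emean_tilted (hν : ∀ l, Integrable (fun t => exp (l * t)) ν) (l : ℝ) :
    Emean (ν.tilted (l * ·)) = deriv (cgf id ν) l :=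
  integral_tilted_mul_self (X := id) (by simp [interior_integrableExpSet_id hν])

lemma KL_tilted [IsProbabilityMeasure ν] (hν : ∀ l, Integrable (fun t => exp (l * t)) ν) (l : ℝ) :
    KL (ν.tilted (l * ·)) ν = ENNReal.ofReal (l * deriv (cgf id ν) l - cgf id ν l) := by
  have hint : Integrable (fun t : ℝ => t) (ν.tilted (l * ·)) := memLp_one_iff_integrable.1
    (memLp_tilted_mul (X := id) (by simp [interior_integrableExpSet_id hν]) 1)
  have hac := tilted_absolutelyContinuous ν (l * ·)
  have hllr : llr (ν.tilted (l * ·)) ν =ᵐ[ν.tilted (l * ·)] fun t => l * t - cgf id ν l :=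
    hac.ae_le (log_rnDeriv_tilted_left_self (hν l))
  have hint' : Integrable (fun t => l * t - cgf id ν l) (ν.tilted (l * ·)) :=
    (hint.const_mul l).sub (integrable_const _)
  have := isProbabilityMeasure_tilted (hν l)
  rw [KL, if_pos ⟨hac, (integrable_congr hllr).2 hint'⟩, ← Emean_tilted hν]
  change ENNReal.ofReal (∫ t, llr _ ν t ∂_) = _
  rw [integral_congr_ae hllr, integral_sub (hint.const_mul l) (integrable_const _),
    integral_const_mul, integral_const, probReal_univ, one_smul]
  rfl

lemma mul_Emean_sub_cgf_le_KL {ζ : Measure ℝ} [IsProbabilityMeasure ζ] [IsProbabilityMeasure ν]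
    (hζ : Integrable (fun t : ℝ => t) ζ) {l : ℝ} (hν : Integrable (fun t => exp (l * t)) ν) :
    ((l * Emean ζ - cgf id ν l : ℝ) : EReal) ≤ KL ζ ν := by
  rw [KL]
  split_ifs with h
  · have hgibbs := integral_sub_log_integral_exp_le_integral_llr h.1 h.2 (hζ.const_mul l) hν
    rw [integral_const_mul] at hgibbs
    rw [EReal.coe_ennreal_ofReal]
    exact EReal.coe_le_coe_iff.2 (hgibbs.trans (le_max_left _ _))
  · exact le_top

lemma phiStar_le_KL {ζ : Measure ℝ} [IsProbabilityMeasure ζ] [IsProbabilityMeasure ν]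
    (hζ : Integrable (fun t : ℝ => t) ζ) (hν : ∀ l, Integrable (fun t => exp (l * t)) ν) {x : ℝ}
    (hζx : Emean ζ ≤ x) (hxν : x ≤ Emean ν) : phiStar ν x ≤ KL ζ ν := by
  have hνid : Integrable (fun t : ℝ => t) ν :=
    integrable_of_mem_interior_integrableExpSet (X := id)
      (by simp [interior_integrableExpSet_id hν])
  rw [phiStar_eq_iSup_cgf hν]
  refine iSup_le fun l => ?_
  rcases le_total l 0 with hl | hl
  · exact (EReal.coe_le_coe_iff.2 (by nlinarith)).trans (mul_Emean_sub_cgf_le_KL hζ (hν l))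
  · calc ((l * x - cgf id ν l : ℝ) : EReal) ≤ ((l * Emean ν - cgf id ν l : ℝ) : EReal) :=
          EReal.coe_le_coe_iff.2 (by nlinarith)
      _ ≤ KL ν ν := mul_Emean_sub_cgf_le_KL hνid (hν l)
      _ = 0 := by rw [KL_self, EReal.coe_ennreal_zero]
      _ ≤ KL ζ ν := EReal.coe_ennreal_nonneg _

lemma phiStar_eq_top_of_ae_le [IsProbabilityMeasure ν]
    (hν : ∀ l, Integrable (fun t => exp (l * t)) ν) {x : ℝ} (hx : ∀ᵐ t ∂ν, x ≤ t)
    (hatom : ν {x} = 0) : phiStar ν x = ⊤ := by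
  have hlim : Tendsto (fun l => mgf id ν l * exp (-(l * x))) atBot (𝓝[>] 0) := by
    refine tendsto_nhdsWithin_iff.2 ⟨?_, Eventually.of_forall fun l =>
      mul_pos (mgf_pos (X := id) (hν l)) (exp_pos _)⟩
    simpa [measureReal_def, hatom] using tendsto_mgf_mul_exp_atBot hx
  rw [phiStar_eq_iSup_cgf hν]
  refine iSup_coe_eq_top_of_tendsto_atTop (F := atBot) ?_
  simp_rw [mul_sub_cgf_eq_neg_log (hν _)]
  exact tendsto_neg_atBot_atTop.comp (tendsto_log_nhdsGT_zero.comp hlim)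

lemma neg_log_measureReal_le_phiStar [IsProbabilityMeasure ν]
    (hν : ∀ l, Integrable (fun t => exp (l * t)) ν) {x : ℝ} (hx : ∀ᵐ t ∂ν, x ≤ t)
    (hatom : ν {x} ≠ 0) : ((-log (ν.real {x}) : ℝ) : EReal) ≤ phiStar ν x := by
  have hpos : 0 < ν.real {x} := ENNReal.toReal_pos hatom (measure_ne_top _ _)
  rw [phiStar_eq_iSup_cgf hν]
  refine coe_le_iSup_of_tendsto (F := atBot) ?_
  simp_rw [mul_sub_cgf_eq_neg_log (hν _)]
  exact ((continuousAt_log hpos.ne').tendsto.comp (tendsto_mgf_mul_exp_atBot hx)).neg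

end ExpMoments

lemma exists_deriv_cgf_eq {ν : Measure ℝ} (hν : ν ∈ Pcc) {x : ℝ} (hxν : x ≤ Emean ν)
    (hx : ν (Iio x) ≠ 0) : ∃ l, deriv (cgf id ν) l = x := by
  have := hν.1
  have hexp := integrable_exp_mul_of_mem_Pcc hν
  obtain ⟨c, hcx, hc⟩ := exists_lt_measure_Iic_ne_zero hx
  have hp : 0 < ν.real (Iic c) := ENNReal.toReal_pos hc (measure_ne_top _ _)
  have hp1 : log (ν.real (Iic c)) ≤ 0 := log_nonpos hp.le measureReal_le_one
  -- `l₁ (x - c) < log ν(Iic c)`, so the lower bound on `cgf` puts the slope of `cgf` on `[l₁, 0]`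
  -- below `x`.
  set l₁ := log (ν.real (Iic c)) / (x - c) - 1
  have hl₁ : l₁ < 0 := by
    have : log (ν.real (Iic c)) / (x - c) ≤ 0 := div_nonpos_of_nonpos_of_nonneg hp1 (by linarith)
    linarith
  have hcgf : l₁ * x ≤ cgf id ν l₁ := by
    have h1 := mul_add_log_measureReal_Iic_le_cgf hexp hl₁.le hp
    have h2 : l₁ * (x - c) = log (ν.real (Iic c)) - (x - c) := by
      rw [sub_mul, div_mul_cancel₀ _ (by linarith), one_mul]
    nlinarith
  obtain ⟨ξ, hξ, hξslope⟩ := exists_deriv_eq_slope (cgf id ν) hl₁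
    (differentiable_cgf hexp).continuous.continuousOn
    (differentiable_cgf hexp).differentiableOn
  have hξx : deriv (cgf id ν) ξ ≤ x := by
    rw [hξslope, cgf_zero, zero_sub, zero_sub, neg_div_neg_eq, div_le_iff_of_neg hl₁]
    linarith
  obtain ⟨l, -, hl⟩ := intermediate_value_Icc hξ.2.le (continuous_deriv_cgf hexp).continuousOn
    ⟨hξx, (deriv_cgf_id_zero hexp).symm ▸ hxν⟩
  exact ⟨l, hl⟩

lemma phiStar_eq_top_or_exists_KL_le {ν : Measure ℝ} (hν : ν ∈ Pcc) {x : ℝ}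
    (hxν : x ≤ Emean ν) :
    phiStar ν x = ⊤ ∨ ∃ ζ ∈ Pcc, Emean ζ = x ∧ (KL ζ ν : EReal) ≤ phiStar ν x := by
  have := hν.1
  have hexp := integrable_exp_mul_of_mem_Pcc hν
  by_cases hIio : ν (Iio x) = 0
  · have hx : ∀ᵐ t ∂ν, x ≤ t := ae_iff.2 (by simp only [not_le]; exact hIio)
    by_cases hatom : ν {x} = 0
    · exact Or.inl (phiStar_eq_top_of_ae_le hexp hx hatom)
    · refine Or.inr ⟨Measure.dirac x, ?_, integral_dirac _ x, ?_⟩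
      · exact mem_Pcc_of_absolutelyContinuous hν (dirac_absolutelyContinuous hatom)
      · rw [KL_dirac hatom]
        exact coe_ofReal_le_phiStar (neg_log_measureReal_le_phiStar hexp hx hatom)
  · obtain ⟨l, hl⟩ := exists_deriv_cgf_eq hν hxν hIio
    refine Or.inr ⟨ν.tilted (l * ·), ?_, (Emean_tilted hexp l).trans hl, ?_⟩
    · have := isProbabilityMeasure_tilted (hexp l)
      exact mem_Pcc_of_absolutelyContinuous hν (tilted_absolutelyContinuous ν _)
    · rw [KL_tilted hexp l, hl]
      refine coe_ofReal_le_phiStar ?_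
      rw [phiStar_eq_iSup_cgf hexp]
      exact le_iSup (fun l => ((l * x - cgf id ν l : ℝ) : EReal)) l

lemma phiStar_eq_Linfle {ν : Measure ℝ} (hν : ν ∈ Pcc) {x : ℝ} (hx : x ≤ Emean ν) :
    phiStar ν x = Linfle Pcc x ν := by
  have := hν.1
  refine eq_coe_biInf_of_forall_le (fun ζ ⟨hζ, hζx⟩ => ?_) ?_
  · have := hζ.1
    exact phiStar_le_KL (integrable_id_of_mem_Pcc hζ)
      (integrable_exp_mul_of_mem_Pcc hν) hζx hx
  · exact (phiStar_eq_top_or_exists_KL_le hν hx).imp_right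
      fun ⟨ζ, hζ, hζx, hKL⟩ => ⟨ζ, ⟨hζ, hζx.le⟩, hKL⟩

def reflect (t : ℝ) : ℝ := 1 - t

lemma measurable_reflect : Measurable reflect :=
  (continuous_const.sub continuous_id).measurable

lemma map_map_reflect (μ : Measure ℝ) : (μ.map reflect).map reflect = μ := by
  rw [Measure.map_map measurable_reflect measurable_reflect]
  convert Measure.map_id
  ext t
  simp [reflect]

lemma map_reflect_mem_Pcc {ζ : Measure ℝ} (hζ : ζ ∈ Pcc) : ζ.map reflect ∈ Pcc := by
  have := hζ.1
  refine ⟨Measure.isProbabilityMeasure_map measurable_reflect.aemeasurable, ?_⟩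
  have hpre : reflect ⁻¹' (Icc 0 1)ᶜ = (Icc 0 1)ᶜ := by
    ext t
    simp only [reflect, preimage_compl, mem_compl_iff, mem_preimage, mem_Icc]
    constructor <;> rintro h ⟨h0, h1⟩ <;> exact h ⟨by linarith, by linarith⟩
  rw [Measure.map_apply measurable_reflect measurableSet_Icc.compl, hpre]
  exact hζ.2

lemma Emean_map_reflect {ζ : Measure ℝ} (hζ : ζ ∈ Pcc) : Emean (ζ.map reflect) = 1 - Emean ζ := by
  have := hζ.1
  rw [Emean, integral_map (f := fun t => t) measurable_reflect.aemeasurable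
    continuous_id.aestronglyMeasurable]
  simp only [reflect]
  rw [integral_sub (integrable_const 1) (integrable_id_of_mem_Pcc hζ)]
  simp [Emean]

lemma KL_map_reflect (ζ ν : Measure ℝ) [IsProbabilityMeasure ζ] [IsProbabilityMeasure ν] :
    KL (ζ.map reflect) (ν.map reflect) = KL ζ ν := by
  have := Measure.isProbabilityMeasure_map (μ := ζ) measurable_reflect.aemeasurable
  have := Measure.isProbabilityMeasure_map (μ := ν) measurable_reflect.aemeasurable
  rw [KL_eq_klDiv, KL_eq_klDiv]
  refine le_antisymm (klDiv_map_le _ _ measurable_reflect) ?_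
  calc klDiv ζ ν = klDiv ((ζ.map reflect).map reflect) ((ν.map reflect).map reflect) := by
        rw [map_map_reflect, map_map_reflect]
    _ ≤ klDiv (ζ.map reflect) (ν.map reflect) := klDiv_map_le _ _ measurable_reflect

lemma cgf_map_reflect {ν : Measure ℝ} [IsProbabilityMeasure ν]
    (hν : ∀ l, Integrable (fun t => exp (l * t)) ν) (l : ℝ) :
    cgf id (ν.map reflect) l = l + cgf id ν (-l) := by
  have hmgf : mgf id (ν.map reflect) l = exp l * mgf id ν (-l) := by
    rw [mgf, integral_map measurable_reflect.aemeasurable (by fun_prop), mgf,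
      ← integral_const_mul]
    congr 1 with t
    rw [← exp_add]
    simp only [reflect, id]
    ring_nf
  rw [cgf, hmgf, log_mul (exp_pos _).ne' (mgf_pos (X := id) (hν _)).ne', log_exp, cgf]

lemma phiStar_map_reflect {ν : Measure ℝ} (hν : ν ∈ Pcc) (x : ℝ) :
    phiStar (ν.map reflect) (1 - x) = phiStar ν x := by
  have := hν.1
  have := (map_reflect_mem_Pcc hν).1
  rw [phiStar_eq_iSup_cgf (integrable_exp_mul_of_mem_Pcc (map_reflect_mem_Pcc hν)),
    phiStar_eq_iSup_cgf (integrable_exp_mul_of_mem_Pcc hν), ← (Equiv.neg ℝ).iSup_comp]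
  congr 1 with l
  rw [cgf_map_reflect (integrable_exp_mul_of_mem_Pcc hν)]
  simp only [Equiv.neg_apply, neg_neg]
  congr 1
  ring

lemma Linfge_eq_Linfle_map_reflect {ν : Measure ℝ} (hν : ν ∈ Pcc) (x : ℝ) :
    Linfge Pcc x ν = Linfle Pcc (1 - x) (ν.map reflect) := by
  have := hν.1
  have := (map_reflect_mem_Pcc hν).1
  apply le_antisymm
  · refine le_iInf₂ fun ζ ⟨hζ, hζx⟩ => ?_
    have := hζ.1
    calc Linfge Pcc x ν ≤ KL (ζ.map reflect) ν :=
          iInf₂_le _ ⟨map_reflect_mem_Pcc hζ, by rw [Emean_map_reflect hζ]; linarith⟩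
      _ = KL ζ (ν.map reflect) := by
          rw [← KL_map_reflect ζ (ν.map reflect), map_map_reflect]
  · refine le_iInf₂ fun ζ ⟨hζ, hζx⟩ => ?_
    have := hζ.1
    calc Linfle Pcc (1 - x) (ν.map reflect) ≤ KL (ζ.map reflect) (ν.map reflect) :=
          iInf₂_le _ ⟨map_reflect_mem_Pcc hζ, by rw [Emean_map_reflect hζ]; linarith⟩
      _ = KL ζ ν := KL_map_reflect ζ ν

/-- Duality for the model `P[0,1]`: for every `ν ∈ P[0,1]`,
`φ*_ν(x) = Linf≤(x,ν)` for all `x ≤ E(ν)` and `φ*_ν(x) = Linf≥(x,ν)` for all `x ≥ E(ν)`,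
both sides taking values in `[0, +∞]`. -/
theorem phiStar_eq_Linf_Pcc (ν : Measure ℝ) (hν : ν ∈ Pcc) :
    (∀ x : ℝ, x ≤ Emean ν → phiStar ν x = (Linfle Pcc x ν : EReal)) ∧
    (∀ x : ℝ, Emean ν ≤ x → phiStar ν x = (Linfge Pcc x ν : EReal)) := by
  refine ⟨fun x hx => phiStar_eq_Linfle hν hx, fun x hx => ?_⟩
  rw [← phiStar_map_reflect hν, Linfge_eq_Linfle_map_reflect hν,
    phiStar_eq_Linfle (map_reflect_mem_Pcc hν) (by rw [Emean_map_reflect hν]; linarith)]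

end
end

section
/- Let ν be a Borel probability measure on [0,1]. Then the logarithmic moment-generating function φ_ν is differentiable on ℝ with derivative φ'_ν(λ) = (∫ x e^{λx} dν(x)) / (∫ e^{λx} dν(x)); this derivative is non-decreasing in λ; and lim_{λ→−∞} φ'_ν(λ) = m(ν), the minimum of the closed support of ν. -/
open MeasureTheory Filter Set ProbabilityTheory
open scoped ENNReal NNReal

noncomputable section

/-! `λ ↦ ln ∫ e^{λx} dν` is the cumulant generating function `cgf id ν`. Its derivative at `λ`
is the mean of the tilted measure `ν_λ ∝ e^{λx} ν` and its second derivative is the variance of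
`ν_λ`, hence nonnegative. As `λ → -∞`, `ν_λ` concentrates at the bottom of the support: for
`m(ν) < c < a`, the mass of `ν_λ` above `a` is at most `e^{λ (a - c)} / ν(-∞, c)`, so the mean of
`ν_λ` is eventually below `a + o(1)`, while it is never below `m(ν)`. -/

open Real Topology

namespace ProbabilityTheory

variable {Ω : Type*} {mΩ : MeasurableSpace Ω} {μ : Measure Ω} {X : Ω → ℝ} {t : ℝ}

lemma hasDerivAt_cgf (h : t ∈ interior (integrableExpSet X μ)) :
    HasDerivAt (cgf X μ) (μ[fun ω ↦ X ω * exp (t * X ω)] / mgf X μ t) t := by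
  rw [← deriv_cgf h]
  exact (analyticAt_cgf h).differentiableAt.hasDerivAt

lemma monotoneOn_deriv_cgf : MonotoneOn (deriv (cgf X μ)) (interior (integrableExpSet X μ)) := by
  have hderiv : AnalyticOnNhd ℝ (deriv (cgf X μ)) (interior (integrableExpSet X μ)) :=
    analyticOnNhd_cgf.deriv
  refine monotoneOn_of_deriv_nonneg (convex_integrableExpSet.interior) hderiv.continuousOn
    (hderiv.differentiableOn.mono interior_subset) fun s hs ↦ ?_
  rw [interior_interior] at hs
  have hvar := variance_nonneg X (μ.tilted (s * X ·))
  rwa [variance_tilted_mul hs, iteratedDeriv_succ, iteratedDeriv_one] at hvar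

end ProbabilityTheory

section BoundedSupport

variable {ν : Measure ℝ}

lemma le_integral_mul_exp_mul_div {m l : ℝ} (hm : ∀ᵐ x ∂ν, m ≤ x)
    (hexp : Integrable (fun x ↦ exp (l * x)) ν) (hxexp : Integrable (fun x ↦ x * exp (l * x)) ν)
    (hpos : 0 < ∫ x, exp (l * x) ∂ν) :
    m ≤ (∫ x, x * exp (l * x) ∂ν) / ∫ x, exp (l * x) ∂ν := by
  rw [le_div_iff₀ hpos, ← integral_const_mul]
  exact integral_mono_ae (hexp.const_mul m) hxexp
    (hm.mono fun x hx ↦ mul_le_mul_of_nonneg_right hx (exp_pos _).le)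

variable [IsFiniteMeasure ν]

lemma integrable_of_continuous_of_ae_mem_Icc {g : ℝ → ℝ} {a b : ℝ} (hg : Continuous g)
    (h : ∀ᵐ x ∂ν, x ∈ Icc a b) : Integrable g ν := by
  rw [← Measure.restrict_eq_self_of_ae_mem h]
  exact hg.continuousOn.integrableOn_compact isCompact_Icc

lemma integrableExpSet_id_eq_univ {a b : ℝ} (h : ∀ᵐ x ∂ν, x ∈ Icc a b) :
    integrableExpSet id ν = univ :=
  eq_univ_of_forall fun t ↦ integrable_of_continuous_of_ae_mem_Icc (by fun_prop) h

lemma mul_measureReal_Iio_le_integral_exp_mul {l : ℝ} (hl : l ≤ 0)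
    (hint : Integrable (fun x ↦ exp (l * x)) ν) (c : ℝ) :
    exp (l * c) * ν.real (Iio c) ≤ ∫ x, exp (l * x) ∂ν :=
  calc exp (l * c) * ν.real (Iio c)
    _ ≤ ∫ x in Iio c, exp (l * x) ∂ν :=
      setIntegral_ge_of_const_le_real measurableSet_Iio (measure_ne_top ν _)
        (fun _ hx ↦ exp_le_exp.2 (mul_le_mul_of_nonpos_left hx.le hl)) hint.integrableOn
    _ ≤ ∫ x, exp (l * x) ∂ν :=
      setIntegral_le_integral hint (Eventually.of_forall fun _ ↦ (exp_pos _).le)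

/-- Below `a` the weight `x` is at most `a`; above `a` the excess `x - a ≤ B - m` is paid for by
`exp (l * x) ≤ exp (l * a)`. -/
lemma mul_exp_mul_le {m B a l x : ℝ} (hx : x ∈ Icc m B) (hma : m ≤ a) (hl : l ≤ 0) :
    x * exp (l * x) ≤ a * exp (l * x) + (B - m) * exp (l * a) := by
  rcases le_total x a with hxa | hax
  · have : 0 ≤ (B - m) * exp (l * a) := mul_nonneg (by linarith [hx.1, hx.2]) (exp_pos _).le
    nlinarith [exp_pos (l * x)]
  · have hexp : exp (l * x) ≤ exp (l * a) := exp_le_exp.2 (mul_le_mul_of_nonpos_left hax hl)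
    nlinarith [exp_pos (l * x), hx.1, hx.2]

variable {m B : ℝ}

lemma integral_mul_exp_mul_le {a l : ℝ} (h : ∀ᵐ x ∂ν, x ∈ Icc m B) (hma : m ≤ a) (hl : l ≤ 0) :
    ∫ x, x * exp (l * x) ∂ν ≤ a * ∫ x, exp (l * x) ∂ν + (B - m) * exp (l * a) * ν.real univ := by
  have hexp : Integrable (fun x ↦ exp (l * x)) ν :=
    integrable_of_continuous_of_ae_mem_Icc (by fun_prop) h
  calc ∫ x, x * exp (l * x) ∂ν
    _ ≤ ∫ x, (a * exp (l * x) + (B - m) * exp (l * a)) ∂ν :=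
      integral_mono_ae (integrable_of_continuous_of_ae_mem_Icc (by fun_prop) h)
        ((hexp.const_mul a).add (integrable_const _))
        (h.mono fun _ hx ↦ mul_exp_mul_le hx hma hl)
    _ = a * ∫ x, exp (l * x) ∂ν + (B - m) * exp (l * a) * ν.real univ := by
      rw [integral_add (hexp.const_mul a) (integrable_const _), integral_const_mul,
        integral_const, smul_eq_mul, mul_comm (ν.real univ)]

lemma integral_mul_exp_mul_div_le {a c l : ℝ} (h : ∀ᵐ x ∂ν, x ∈ Icc m B) (hma : m ≤ a)
    (hl : l ≤ 0) (hc : 0 < ν.real (Iio c)) :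
    (∫ x, x * exp (l * x) ∂ν) / ∫ x, exp (l * x) ∂ν ≤
      a + (B - m) * ν.real univ / ν.real (Iio c) * exp (l * (a - c)) := by
  have hI := mul_measureReal_Iio_le_integral_exp_mul hl
    (integrable_of_continuous_of_ae_mem_Icc (by fun_prop) h) c
  have hmB : 0 ≤ B - m := by
    have : NeZero ν := ⟨fun h ↦ by simp [h] at hc⟩
    obtain ⟨x, hmx, hxB⟩ := h.exists
    linarith
  set K := (B - m) * ν.real univ / ν.real (Iio c) with hK_def
  have hsplit : (B - m) * exp (l * a) * ν.real univ =
      K * exp (l * (a - c)) * (exp (l * c) * ν.real (Iio c)) := by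
    rw [mul_assoc K, ← mul_assoc (exp _), ← exp_add, ← mul_add, sub_add_cancel, hK_def]
    field_simp
  rw [div_le_iff₀ ((by positivity : 0 < exp (l * c) * ν.real (Iio c)).trans_le hI), add_mul]
  calc ∫ x, x * exp (l * x) ∂ν
    _ ≤ a * ∫ x, exp (l * x) ∂ν + (B - m) * exp (l * a) * ν.real univ :=
      integral_mul_exp_mul_le h hma hl
    _ ≤ a * ∫ x, exp (l * x) ∂ν + K * exp (l * (a - c)) * ∫ x, exp (l * x) ∂ν := by
      rw [hsplit]
      gcongr

theorem tendsto_integral_mul_exp_mul_div_atBot (h : ∀ᵐ x ∂ν, x ∈ Icc m B)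
    (hpos : ∀ c, m < c → 0 < ν (Iio c)) :
    Tendsto (fun l ↦ (∫ x, x * exp (l * x) ∂ν) / ∫ x, exp (l * x) ∂ν) atBot (𝓝 m) := by
  have : NeZero ν := ⟨fun h ↦ by simpa [h] using hpos (m + 1) (by linarith)⟩
  refine tendsto_order.2 ⟨fun b hb ↦ Eventually.of_forall fun l ↦ hb.trans_le ?_, fun b hb ↦ ?_⟩
  · have hexp : Integrable (fun x ↦ exp (l * x)) ν :=
      integrable_of_continuous_of_ae_mem_Icc (by fun_prop) h
    exact le_integral_mul_exp_mul_div (h.mono fun _ hx ↦ hx.1) hexp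
      (integrable_of_continuous_of_ae_mem_Icc (by fun_prop) h) (integral_exp_pos hexp)
  obtain ⟨a, hma, hab⟩ := exists_between hb
  obtain ⟨c, hmc, hca⟩ := exists_between hma
  have hc : 0 < ν.real (Iio c) := ENNReal.toReal_pos (hpos c hmc).ne' (measure_ne_top ν _)
  have hlim : Tendsto (fun l ↦ a + (B - m) * ν.real univ / ν.real (Iio c) * exp (l * (a - c)))
      atBot (𝓝 a) := by
    have : Tendsto (fun l ↦ exp (l * (a - c))) atBot (𝓝 0) :=
      tendsto_exp_atBot.comp (tendsto_id.atBot_mul_const (sub_pos.2 hca))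
    simpa using (this.const_mul _).const_add a
  filter_upwards [eventually_le_atBot 0, hlim.eventually (gt_mem_nhds hab)] with l hl hlt
  exact (integral_mul_exp_mul_div_le h hma.le hl hc).trans_lt hlt

end BoundedSupport

lemma msupport_eq_support (ν : Measure ℝ) : msupport ν = ν.support := by
  ext x
  simp [msupport, Measure.mem_support_iff_forall, pos_iff_ne_zero]

lemma ae_sInf_support_le {ν : Measure ℝ} (hbdd : BddBelow ν.support) :
    ∀ᵐ x ∂ν, sInf ν.support ≤ x :=
  Eventually.mono Measure.support_mem_ae fun _ hx ↦ csInf_le hbdd hx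

lemma measure_Iio_pos_of_sInf_support_lt {ν : Measure ℝ} (hne : ν.support.Nonempty) {c : ℝ}
    (hc : sInf ν.support < c) : 0 < ν (Iio c) := by
  obtain ⟨x, hx, hxc⟩ := exists_lt_of_csInf_lt hne hc
  exact (Measure.mem_support_iff_forall x).1 hx _ (Iio_mem_nhds hxc)

/-- For a Borel probability measure `ν` on `[0,1]`: the logarithmic moment-generating function
`λ ↦ ln ∫ e^{λx} dν(x)` is differentiable on ℝ with derivative
`λ ↦ (∫ x e^{λx} dν(x)) / (∫ e^{λx} dν(x))`; this derivative is non-decreasing in `λ`;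
and it tends to `m(ν)`, the minimum of the closed support of `ν`, as `λ → −∞`. -/
theorem logMgf_hasDerivAt_monotone_tendsto (ν : Measure ℝ) (hν : ν ∈ Pcc) :
    (∀ l : ℝ, HasDerivAt (fun t : ℝ => Real.log (∫ x, Real.exp (t * x) ∂ν))
        ((∫ x, x * Real.exp (l * x) ∂ν) / (∫ x, Real.exp (l * x) ∂ν)) l) ∧
    Monotone (fun l : ℝ => (∫ x, x * Real.exp (l * x) ∂ν) / (∫ x, Real.exp (l * x) ∂ν)) ∧
    Filter.Tendsto (fun l : ℝ => (∫ x, x * Real.exp (l * x) ∂ν) / (∫ x, Real.exp (l * x) ∂ν))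
      Filter.atBot (nhds (mMin ν)) := by
  obtain ⟨hprob, hν01⟩ := hν
  have h01 : ∀ᵐ x ∂ν, x ∈ Icc (0 : ℝ) 1 := ae_iff.2 hν01
  have hexp : integrableExpSet id ν = univ := integrableExpSet_id_eq_univ h01
  have hderiv (l : ℝ) : HasDerivAt (cgf id ν)
      ((∫ x, x * exp (l * x) ∂ν) / ∫ x, exp (l * x) ∂ν) l :=
    hasDerivAt_cgf (by simp [hexp])
  refine ⟨hderiv, ?_, ?_⟩
  · have hmono := monotoneOn_deriv_cgf (X := id) (μ := ν)
    rw [hexp, interior_univ, monotoneOn_univ] at hmono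
    convert hmono using 1
    exact funext fun l ↦ (hderiv l).deriv.symm
  · have hbdd : BddBelow ν.support :=
      ⟨0, fun x hx ↦ (Measure.support_subset_of_isClosed isClosed_Icc h01 hx).1⟩
    rw [mMin, msupport_eq_support]
    refine tendsto_integral_mul_exp_mul_div_atBot (B := 1) ?_ fun c hc ↦
      measure_Iio_pos_of_sInf_support_lt (Measure.nonempty_support hprob.ne_zero) hc
    filter_upwards [ae_sInf_support_le hbdd, h01] with x hmx hx using ⟨hmx, hx.2⟩

end
end
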